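/- In an ADTree where the semantics of an AND gate accumulates time as the maximum of its children's accumulated times and agents as the sum of its children's agent counts, the computed agent count at the root is an upper bound on the minimum number of agents needed to perform the attack within the computed time. -/
import Mathlib


/-- AND gate upper bound: if each child subtree `i` (a DAG of unit tasks) can be
performed by `a i` agents within time `t i`, then all subtrees can be performed in
parallel with disjoint agent sets, so the root attack can be performed with at most
`∑ i, a i` agents in time `max i, t i`. -/
theorem and_gate_agents_upper_bound {ι : Type} [Fintype ι] [DecidableEq ι]
    (V : ι → Type) [∀ i, Fintype (V i)]
    (edge : ∀ i, V i → V i → Prop) (a t : ι → ℕ)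
    (h : ∀ i, ∃ f : V i → Fin (a i) × Fin (t i),
      Function.Injective f ∧ ∀ u v, edge i u v → ((f u).2 : ℕ) < ((f v).2 : ℕ)) :
    ∃ g : (Σ i, V i) → Fin (∑ i, a i) × Fin (Finset.univ.sup t),
      Function.Injective g ∧
      ∀ (i : ι) (u v : V i), edge i u v →
        ((g ⟨i, u⟩).2 : ℕ) < ((g ⟨i, v⟩).2 : ℕ) := by
  choose f hinj hmono using h
  have e : (Σ i, Fin (a i)) ≃ Fin (∑ i, a i) :=
    Fintype.equivFinOfCardEq (by simp)
  refine ⟨fun x => (e ⟨x.1, (f x.1 x.2).1⟩,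
      Fin.castLE (Finset.le_sup (Finset.mem_univ x.1)) (f x.1 x.2).2), ?_, ?_⟩
  · rintro ⟨i, u⟩ ⟨j, v⟩ hxy
    simp only [Prod.mk.injEq] at hxy
    obtain ⟨h1, h2⟩ := hxy
    have h1' := e.injective h1
    obtain ⟨rfl, h1''⟩ := Sigma.mk.inj_iff.mp h1'
    have h1'' : (f i u).1 = (f i v).1 := by simpa using h1''
    have h2' : (f i u).2 = (f i v).2 := by
      have := congrArg Fin.val h2
      simp [Fin.castLE] at this
      exact Fin.ext this
    have : f i u = f i v := Prod.ext h1'' h2'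
    exact congrArg _ (hinj i this)
  · intro i u v huv
    simpa using hmono i u v huv
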